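/- Assume zero no-shows, constant idle time costs equal to $1$, terminal idle cost $c_{n+1} = 1$, overtime cost $c_o = 0$, common guarantee $W$, and ASAP appointment times. Then the worst-case total idle-time cost of any sequence $\pi$ equals $c_{n+1}\epsilon$ plus $\left(\sum_{j=1}^{n}(\bar{p}_j - \ubar{p}_j) - W\right)^+$, and in particular is independent of the sequence $\pi$ (where $L = \sum_j \bar{p}_j - W + \epsilon$). -/
import Mathlib


/-- Completion times from appointment times `A` and service durations `sv`. -/
noncomputable def ctimes19 (A sv : ℕ → ℝ) : ℕ → ℝ
  | 0 => 0
  | i + 1 => max (A (i + 1)) (ctimes19 A sv i) + sv (i + 1)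

/-- ASAP appointment times for sequence `σ` with uniform guarantee `W` and
`A (n+1) = L` (zero no-shows). -/
noncomputable def asapA19 (n : ℕ) (hi : ℕ → ℝ) (W L : ℝ) (σ : ℕ → ℕ) (i : ℕ) : ℝ :=
  if i = n + 1 then L
  else max ((∑ k ∈ Finset.Icc 1 (i - 1), hi (σ k)) - W) 0

lemma ctimes19_telescope (A sv : ℕ → ℝ) (m : ℕ) :
    ∑ i ∈ Finset.Icc 1 m, max (A i - ctimes19 A sv (i - 1)) 0
      = ctimes19 A sv m - ∑ i ∈ Finset.Icc 1 m, sv i := by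
  induction m with
  | zero => simp [ctimes19]
  | succ m ih =>
    rw [Finset.sum_Icc_succ_top (by omega : 1 ≤ m + 1),
        Finset.sum_Icc_succ_top (by omega : 1 ≤ m + 1), ih]
    have h1 : max (A (m + 1) - ctimes19 A sv m) 0
        = max (A (m + 1)) (ctimes19 A sv m) - ctimes19 A sv m := by
      rw [← max_sub_sub_right, sub_self]
    have h2 : ctimes19 A sv (m + 1)
        = max (A (m + 1)) (ctimes19 A sv m) + sv (m + 1) := rfl
    simp only [Nat.add_sub_cancel, h1, h2]
    ring

lemma sum_comp_bijOn {n : ℕ} {σ : ℕ → ℕ}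
    (hbij : Set.BijOn σ (Set.Icc 1 n) (Set.Icc 1 n)) (f : ℕ → ℝ) :
    ∑ k ∈ Finset.Icc 1 n, f (σ k) = ∑ j ∈ Finset.Icc 1 n, f j := by
  refine Finset.sum_bij (fun k _ => σ k) ?_ ?_ ?_ ?_
  · intro a ha
    have := hbij.mapsTo (by simpa [Set.mem_Icc] using Finset.mem_Icc.mp ha)
    simpa [Finset.mem_Icc, Set.mem_Icc] using this
  · intro a ha b hb h
    exact hbij.injOn (by simpa [Set.mem_Icc] using Finset.mem_Icc.mp ha)
      (by simpa [Set.mem_Icc] using Finset.mem_Icc.mp hb) h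
  · intro b hb
    obtain ⟨a, ha, rfl⟩ := hbij.surjOn (by simpa [Set.mem_Icc] using Finset.mem_Icc.mp hb)
    exact ⟨a, by simpa [Finset.mem_Icc, Set.mem_Icc] using ha, rfl⟩
  · intros; rfl

lemma sum_comp_le {n m : ℕ} {σ : ℕ → ℕ}
    (hbij : Set.BijOn σ (Set.Icc 1 n) (Set.Icc 1 n)) (hm : m ≤ n)
    (d : ℕ → ℝ) (hd : ∀ j, 0 ≤ d j) :
    ∑ k ∈ Finset.Icc 1 m, d (σ k) ≤ ∑ j ∈ Finset.Icc 1 n, d j := by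
  have hsub : Finset.Icc 1 m ⊆ Finset.Icc 1 n := by
    intro x hx; simp only [Finset.mem_Icc] at *; omega
  have hinj : Set.InjOn σ (Finset.Icc 1 m : Set ℕ) := by
    intro a ha b hb h
    exact hbij.injOn
      (by simp only [Finset.coe_Icc, Set.mem_Icc] at ha ⊢; omega)
      (by simp only [Finset.coe_Icc, Set.mem_Icc] at hb ⊢; omega) h
  rw [← Finset.sum_image (fun a ha b hb h => hinj ha hb h)]
  refine Finset.sum_le_sum_of_subset_of_nonneg ?_ (fun j _ _ => hd j)
  intro j hj
  obtain ⟨a, ha, rfl⟩ := Finset.mem_image.mp hj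
  have := hbij.mapsTo (x := a)
    (by simp only [Finset.mem_Icc] at ha; simp only [Set.mem_Icc]; omega)
  simpa [Finset.mem_Icc, Set.mem_Icc] using this

/-- with zero no-shows, unit idle costs, zero overtime cost, a
common guarantee `W` and ASAP times, the worst-case total idle-time cost of any
sequence `σ` equals `ε + (∑_j (p̄_j - p̲_j) - W)⁺`; in particular it is
independent of the sequence. -/
theorem worst_case_idle_cost_sequence_independent
    (n : ℕ) (σ : ℕ → ℕ) (hbij : Set.BijOn σ (Set.Icc 1 n) (Set.Icc 1 n))
    (lo hi : ℕ → ℝ) (W eps L : ℝ)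
    (hlo : ∀ j, 0 ≤ lo j) (hlohi : ∀ j, lo j ≤ hi j)
    (hW : 0 ≤ W) (heps : 0 ≤ eps)
    (hWd : W ≤ ∑ j ∈ Finset.Icc 1 n, (hi j - lo j))
    (hL : L = (∑ j ∈ Finset.Icc 1 n, hi j) - W + eps) :
    sSup {x | ∃ p : ℕ → ℝ, (∀ j, p j ∈ Set.Icc (lo j) (hi j)) ∧
        x = ∑ i ∈ Finset.Icc 1 (n + 1),
          max (asapA19 n hi W L σ i -
            ctimes19 (asapA19 n hi W L σ) (fun k => p (σ k)) (i - 1)) 0} =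
      max ((∑ j ∈ Finset.Icc 1 n, (hi j - lo j)) - W) 0 + eps := by
  set A := asapA19 n hi W L σ with hAdef
  set D : ℝ := ∑ j ∈ Finset.Icc 1 n, (hi j - lo j) with hDdef
  have hD0 : 0 ≤ D - W := by linarith
  have hAle : ∀ i, i ≤ n → A i = max ((∑ k ∈ Finset.Icc 1 (i - 1), hi (σ k)) - W) 0 := by
    intro i hi2
    simp only [hAdef, asapA19, if_neg (by omega : i ≠ n + 1)]
  have hAtop : A (n + 1) = L := by simp [hAdef, asapA19]
  -- key bound on completion times
  have key : ∀ p : ℕ → ℝ, (∀ j, p j ∈ Set.Icc (lo j) (hi j)) → ∀ m, m ≤ n →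
      ctimes19 A (fun k => p (σ k)) m
        ≤ (∑ k ∈ Finset.Icc 1 m, p (σ k)) + (D - W) := by
    intro p hp
    intro m
    induction m with
    | zero => intro _; simpa [ctimes19] using hD0
    | succ m ih =>
      intro hmn
      have ihm := ih (by omega)
      have hQ0 : 0 ≤ ∑ k ∈ Finset.Icc 1 m, p (σ k) :=
        Finset.sum_nonneg fun k _ => le_trans (hlo _) (hp (σ k)).1
      have hAbound : A (m + 1) ≤ (∑ k ∈ Finset.Icc 1 m, p (σ k)) + (D - W) := by
        rw [hAle (m + 1) hmn]
        simp only [Nat.add_sub_cancel]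
        have h1 : (∑ k ∈ Finset.Icc 1 m, hi (σ k)) - W
            ≤ (∑ k ∈ Finset.Icc 1 m, p (σ k)) + (D - W) := by
          have hle : ∑ k ∈ Finset.Icc 1 m, (hi (σ k) - p (σ k))
              ≤ ∑ k ∈ Finset.Icc 1 m, (hi (σ k) - lo (σ k)) :=
            Finset.sum_le_sum fun k _ => by linarith [(hp (σ k)).1]
          have hle2 : ∑ k ∈ Finset.Icc 1 m, (hi (σ k) - lo (σ k)) ≤ D :=
            sum_comp_le hbij (by omega) (fun j => hi j - lo j)
              (fun j => sub_nonneg.2 (hlohi j))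
          have := Finset.sum_sub_distrib (s := Finset.Icc 1 m)
            (f := fun k => hi (σ k)) (g := fun k => p (σ k))
          linarith [hle, hle2, this]
        exact max_le h1 (by linarith)
      have hstep : ctimes19 A (fun k => p (σ k)) (m + 1)
          = max (A (m + 1)) (ctimes19 A (fun k => p (σ k)) m) + p (σ (m + 1)) := rfl
      rw [hstep, Finset.sum_Icc_succ_top (by omega : 1 ≤ m + 1)]
      have := max_le hAbound ihm
      linarith
  have hsumlo : ∑ k ∈ Finset.Icc 1 n, lo (σ k) = ∑ j ∈ Finset.Icc 1 n, lo j :=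
    sum_comp_bijOn hbij lo
  -- general value formula
  have hval : ∀ p : ℕ → ℝ,
      ∑ i ∈ Finset.Icc 1 (n + 1),
          max (A i - ctimes19 A (fun k => p (σ k)) (i - 1)) 0
        = max L (ctimes19 A (fun k => p (σ k)) n) - ∑ k ∈ Finset.Icc 1 n, p (σ k) := by
    intro p
    rw [ctimes19_telescope A (fun k => p (σ k)) (n + 1)]
    have hC : ctimes19 A (fun k => p (σ k)) (n + 1)
        = max (A (n + 1)) (ctimes19 A (fun k => p (σ k)) n) + p (σ (n + 1)) := rfl
    rw [hC, hAtop, Finset.sum_Icc_succ_top (by omega : 1 ≤ n + 1)]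
    ring
  have hmaxeq : max (D - W) 0 = D - W := max_eq_left hD0
  rw [hmaxeq]
  apply IsGreatest.csSup_eq
  constructor
  · -- membership: take p = lo
    refine ⟨lo, fun j => ⟨le_refl _, hlohi j⟩, ?_⟩
    rw [hval lo, hsumlo]
    have hCle : ctimes19 A (fun k => lo (σ k)) n ≤ L := by
      have := key lo (fun j => ⟨le_refl _, hlohi j⟩) n le_rfl
      rw [hsumlo] at this
      have hDsum : D = (∑ j ∈ Finset.Icc 1 n, hi j) - ∑ j ∈ Finset.Icc 1 n, lo j := by
        rw [hDdef, Finset.sum_sub_distrib]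
      rw [hL]; rw [hDsum] at this; linarith
    rw [max_eq_left hCle, hL]
    have hDsum : D = (∑ j ∈ Finset.Icc 1 n, hi j) - ∑ j ∈ Finset.Icc 1 n, lo j := by
      rw [hDdef, Finset.sum_sub_distrib]
    rw [hDsum]; ring
  · rintro x ⟨p, hp, rfl⟩
    rw [hval p]
    have hQlo : ∑ j ∈ Finset.Icc 1 n, lo j ≤ ∑ k ∈ Finset.Icc 1 n, p (σ k) := by
      rw [← hsumlo]
      exact Finset.sum_le_sum fun k _ => (hp (σ k)).1
    have hCb := key p hp n le_rfl
    have hDsum : D = (∑ j ∈ Finset.Icc 1 n, hi j) - ∑ j ∈ Finset.Icc 1 n, lo j := by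
      rw [hDdef, Finset.sum_sub_distrib]
    have hLle : L - ∑ k ∈ Finset.Icc 1 n, p (σ k) ≤ D - W + eps := by
      rw [hL, hDsum]; linarith
    have hCle : ctimes19 A (fun k => p (σ k)) n - ∑ k ∈ Finset.Icc 1 n, p (σ k)
        ≤ D - W + eps := by linarith
    have := max_le hLle hCle
    have hms : max L (ctimes19 A (fun k => p (σ k)) n) - ∑ k ∈ Finset.Icc 1 n, p (σ k)
        = max (L - ∑ k ∈ Finset.Icc 1 n, p (σ k))
            (ctimes19 A (fun k => p (σ k)) n - ∑ k ∈ Finset.Icc 1 n, p (σ k)) := by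
      rw [max_sub_sub_right]
    rw [hms]
    exact this
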